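/- arXiv:2206.01068 — 10 statements merged into one kernel-verified Lean document; each statement's English description precedes it below -/
import Mathlib

section
/- Let Ĥ be a weakly balanced bipartite signed graph (no purely red edges). If Ĥ has no chain, then the set D (the reachability closure in H⁺ of the set D_0 of all pairs (x,y) such that some vertex z has a bicoloured edge zx and a blue edge zy) contains no circuit. -/
variable {A B : Type*}

/-- An arc of the pair digraph `H⁺` of a bipartite graph with parts `A`, `B`. -/
def PairDom (E : A → B → Prop) : (A × A) ⊕ (B × B) → (A × A) ⊕ (B × B) → Prop
  | Sum.inl (a, a'), Sum.inr (b, b') => E a b ∧ E a' b' ∧ ¬ E a b'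
  | Sum.inr (b, b'), Sum.inl (a, a') => E a b ∧ E a' b' ∧ ¬ E a' b
  | _, _ => False

/-- A circuit in a set `D` of vertices of `H⁺`: pairs
`(x_0,x_1), (x_1,x_2), …, (x_n,x_0)`, `n ≥ 1`, all in `D`. -/
def HasCircuit (D : Set ((A × A) ⊕ (B × B))) : Prop :=
  ∃ n : ℕ, 0 < n ∧
    ((∃ x : Fin (n + 1) → A, ∀ i, Sum.inl (x i, x (i + 1)) ∈ D) ∨
     (∃ x : Fin (n + 1) → B, ∀ i, Sum.inr (x i, x (i + 1)) ∈ D))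

/-- The set `D_0` of pairs `(x,y)` such that for some vertex `z` (in the opposite
part), `zx` is a bicoloured edge and `zy` is a blue (unicoloured) edge. -/
def DZero (E bic : A → B → Prop) : Set ((A × A) ⊕ (B × B)) := fun p =>
  match p with
  | Sum.inl (x, y) => ∃ z : B, bic x z ∧ E y z ∧ ¬ bic y z
  | Sum.inr (x, y) => ∃ z : A, bic z x ∧ E z y ∧ ¬ bic z y

/-- The reachability closure `D` of `D_0` in the pair digraph `H⁺`. -/
def DClosure (E bic : A → B → Prop) : Set ((A × A) ⊕ (B × B)) :=
  {q | ∃ p ∈ DZero E bic, Relation.ReflTransGen (PairDom E) p q}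

/-- The edge relation of the underlying graph on the vertex set `A ⊕ B`. -/
def EdgeSum (E : A → B → Prop) : A ⊕ B → A ⊕ B → Prop
  | Sum.inl a, Sum.inr b => E a b
  | Sum.inr b, Sum.inl a => E a b
  | _, _ => False

/-- A chain in a signed graph with edge relation `Ed` and bicoloured edges `bic`:
two walks `U = u_0, …, u_k` and `D = d_0, …, d_k` of equal length from `u` to `v`,
with `u_0u_1` and `d_{k-1}d_k` unicoloured, `u_0d_1` and `u_{k-1}u_k` bicoloured, and
for `1 ≤ i ≤ k-2` either `u_iu_{i+1}`, `d_id_{i+1}` are edges while `d_iu_{i+1}` is not,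
or `u_iu_{i+1}`, `d_id_{i+1}` are bicoloured while `d_iu_{i+1}` is not bicoloured. -/
def HasChain {V : Type*} (Ed bic : V → V → Prop) : Prop :=
  ∃ (k : ℕ) (U D : ℕ → V), 0 < k ∧ U 0 = D 0 ∧ U k = D k ∧
    (Ed (U 0) (U 1) ∧ ¬ bic (U 0) (U 1)) ∧
    (Ed (D (k - 1)) (D k) ∧ ¬ bic (D (k - 1)) (D k)) ∧
    bic (U 0) (D 1) ∧ bic (U (k - 1)) (U k) ∧
    ∀ i, 1 ≤ i → i ≤ k - 2 →
      ((Ed (U i) (U (i + 1)) ∧ Ed (D i) (D (i + 1)) ∧ ¬ Ed (D i) (U (i + 1))) ∨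
       (bic (U i) (U (i + 1)) ∧ bic (D i) (D (i + 1)) ∧ ¬ bic (D i) (U (i + 1))))

/-! Work on the vertex set `V = A ⊕ B`, with the underlying graph `Ed` and its bicoloured
part `Bd` as symmetric relations, and add to `H⁺` the arcs `PairArc Bd` between bicoloured
edges. The closure `SignedReach` of `D_0` under all these arcs contains `D`. A chain is exactly
a walk from a pair of `D_0` to the reverse of a pair of `D_0`, so without chains `SignedReach`
is asymmetric; with this, an induction along the walk reaching `(v, w)` shows that it is
transitive, rerouting `(u, v)` through the neighbours of `u`. A transitive irreflexive
relation has no circuit. -/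

open Relation

section SignedPairDigraph

variable {V : Type*}

def PairArc (R : V → V → Prop) (p q : V × V) : Prop :=
  R p.1 q.1 ∧ R p.2 q.2 ∧ ¬ R p.1 q.2

def SignedPairArc (Ed Bd : V → V → Prop) (p q : V × V) : Prop :=
  PairArc Ed p q ∨ PairArc Bd p q

def SeedPair (Ed Bd : V → V → Prop) (p : V × V) : Prop :=
  ∃ z, Bd p.1 z ∧ Ed p.2 z ∧ ¬ Bd p.2 z

def SignedReach (Ed Bd : V → V → Prop) (x y : V) : Prop :=
  ∃ p, SeedPair Ed Bd p ∧ ReflTransGen (SignedPairArc Ed Bd) p (x, y)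

variable {R Ed Bd : V → V → Prop}

lemma PairArc.swap [Std.Symm R] {p q : V × V} (h : PairArc R p q) :
    PairArc R q.swap p.swap :=
  ⟨symm h.2.1, symm h.1, fun h' => h.2.2 (symm h')⟩

lemma SignedPairArc.swap [Std.Symm Ed] [Std.Symm Bd] {p q : V × V}
    (h : SignedPairArc Ed Bd p q) : SignedPairArc Ed Bd q.swap p.swap :=
  h.imp PairArc.swap PairArc.swap

lemma reflTransGen_signedPairArc_swap [Std.Symm Ed] [Std.Symm Bd] {p q : V × V}
    (h : ReflTransGen (SignedPairArc Ed Bd) p q) :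
    ReflTransGen (SignedPairArc Ed Bd) q.swap p.swap :=
  ReflTransGen.lift Prod.swap (fun _ _ => SignedPairArc.swap) _ _ (reflTransGen_swap.mpr h)

lemma Relation.ReflTransGen.exists_nat_seq {α : Type*} {r : α → α → Prop} {a b : α}
    (h : ReflTransGen r a b) :
    ∃ (m : ℕ) (f : ℕ → α), f 0 = a ∧ f m = b ∧ ∀ t < m, r (f t) (f (t + 1)) := by
  induction h with
  | refl => exact ⟨0, fun _ => a, rfl, rfl, fun t ht => absurd ht t.not_lt_zero⟩
  | @tail b c _ hbc ih =>
    obtain ⟨m, f, hf0, hfm, hf⟩ := ih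
    refine ⟨m + 1, fun t => if t ≤ m then f t else c, by simpa using hf0, by simp, ?_⟩
    intro t ht
    rcases Nat.lt_or_ge t m with htm | htm
    · simpa [htm.le, Nat.succ_le_of_lt htm] using hf t htm
    · obtain rfl : t = m := by omega
      simpa [hfm] using hbc

/-- The walk `U` of the chain runs along the second coordinates of the walk in the pair
digraph and `D` along the first ones; the seed witnesses close both walks off. -/
theorem hasChain_of_reflTransGen [Std.Symm Ed] [Std.Symm Bd] {p q : V × V}
    (hp : SeedPair Ed Bd p) (hw : ReflTransGen (SignedPairArc Ed Bd) p q)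
    (hq : SeedPair Ed Bd q.swap) : HasChain Ed Bd := by
  obtain ⟨u, hpu₁, hpu₂, hpu₃⟩ := hp
  obtain ⟨v, hqv₁, hqv₂, hqv₃⟩ := hq
  obtain ⟨m, f, hf0, hfm, hf⟩ := hw.exists_nat_seq
  let g : ℕ → V × V
    | 0 => (u, u)
    | t + 1 => if t ≤ m then f t else (v, v)
  have hg1 : g 1 = p := by simp [g, hf0]
  have hgm : g (m + 1) = q := by simp [g, hfm]
  have hgm' : g (m + 2) = (v, v) := by simp [g]
  refine ⟨m + 2, fun t => (g t).2, fun t => (g t).1, by omega, rfl, by simp [hgm'], ?_, ?_,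
    ?_, ?_, ?_⟩
  · simpa [hg1] using ⟨symm hpu₂, fun h => hpu₃ (symm h)⟩
  · simpa [hgm, hgm'] using ⟨hqv₂, hqv₃⟩
  · simpa [hg1] using symm hpu₁
  · simpa [hgm, hgm'] using hqv₁
  · intro i hi₁ hi₂
    obtain ⟨j, rfl⟩ : ∃ j, i = j + 1 := ⟨i - 1, by omega⟩
    have hgj : g (j + 1) = f j := by simp [g]; omega
    have hgj' : g (j + 1 + 1) = f (j + 1) := by simp [g]; omega
    beta_reduce
    rw [hgj, hgj']
    rcases hf j (by omega) with ⟨h₁, h₂, h₃⟩ | ⟨h₁, h₂, h₃⟩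
    · exact .inl ⟨h₂, h₁, h₃⟩
    · exact .inr ⟨h₂, h₁, h₃⟩

namespace SignedReach

variable {u v w x y x' y' : V}

lemma of_seedPair (h : SeedPair Ed Bd (x, y)) : SignedReach Ed Bd x y :=
  ⟨_, h, .refl⟩

lemma tail (h : SignedReach Ed Bd x y) (harc : SignedPairArc Ed Bd (x, y) (x', y')) :
    SignedReach Ed Bd x' y' :=
  let ⟨p, hp, hw⟩ := h
  ⟨p, hp, hw.tail harc⟩

lemma edge (h : SignedReach Ed Bd x y) (hx : Ed x x') (hy : Ed y y') (hxy : ¬ Ed x y') :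
    SignedReach Ed Bd x' y' :=
  h.tail (.inl ⟨hx, hy, hxy⟩)

lemma bic (h : SignedReach Ed Bd x y) (hx : Bd x x') (hy : Bd y y') (hxy : ¬ Bd x y') :
    SignedReach Ed Bd x' y' :=
  h.tail (.inr ⟨hx, hy, hxy⟩)

lemma irrefl (x : V) : ¬ SignedReach Ed Bd x x := by
  rintro ⟨p, hp, hw⟩
  rcases hw.cases_tail with rfl | ⟨c, -, ⟨h₁, -, h₃⟩ | ⟨h₁, -, h₃⟩⟩
  · obtain ⟨z, h₁, -, h₃⟩ := hp
    exact h₃ h₁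
  all_goals exact h₃ h₁

lemma asymm [Std.Symm Ed] [Std.Symm Bd] (hnc : ¬ HasChain Ed Bd)
    (hxy : SignedReach Ed Bd x y) : ¬ SignedReach Ed Bd y x := by
  rintro ⟨p, hp, hw⟩
  obtain ⟨p₀, hp₀, hw₀⟩ := hxy
  exact hnc (hasChain_of_reflTransGen hp₀ (hw₀.trans (reflTransGen_signedPairArc_swap hw)) hp)

lemma seedPair_of_forall_adj [Std.Symm Ed] [Std.Symm Bd] (hBE : Bd ≤ Ed)
    (huv : SignedReach Ed Bd u v) (hN : ∀ α, Ed u α → Ed α v) : SeedPair Ed Bd (u, v) := by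
  obtain ⟨p, hp, hw⟩ := huv
  rcases hw.cases_tail with rfl | ⟨c, -, ⟨h₁, -, h₃⟩ | ⟨h₁, h₂, h₃⟩⟩
  · exact hp
  · exact absurd (hN c.1 (symm h₁)) h₃
  · exact ⟨c.1, symm h₁, symm (hN c.1 (symm (hBE _ _ h₁))), fun h => h₃ (symm h)⟩

lemma trans_of_forall_adj [Std.Symm Ed] [Std.Symm Bd] (hBE : Bd ≤ Ed)
    (hnc : ¬ HasChain Ed Bd) (huv : SignedReach Ed Bd u v) (hvw : SignedReach Ed Bd v w)
    (hN : ∀ α, Ed u α → Ed α v ∧ Ed α w) : SignedReach Ed Bd u w := by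
  obtain ⟨z, huz, hvz, hvz'⟩ := seedPair_of_forall_adj hBE huv fun α hα => (hN α hα).1
  by_cases hwz : Bd w z
  · exact (asymm hnc hvw (of_seedPair ⟨z, hwz, hvz, hvz'⟩)).elim
  · exact of_seedPair ⟨z, huz, symm (hN z (hBE _ _ huz)).2, hwz⟩

/-- Each neighbour `α` of `u` gives `(u, v) → (α, a) ⇝ (α, b)`, followed by
`(α, b) → (u, w)` unless `α ~ w`; if `α ~ w` but `α ≁ v`, then `(α, a) → (w, v)`
contradicts asymmetry. -/
lemma trans_of_reroute [Std.Symm Ed] [Std.Symm Bd] (hBE : Bd ≤ Ed)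
    (hnc : ¬ HasChain Ed Bd) {a b : V} (huv : SignedReach Ed Bd u v)
    (hvw : SignedReach Ed Bd v w) (hav : Ed a v) (hbw : Ed b w) (hau : ¬ Ed a u)
    (hab : ∀ α, SignedReach Ed Bd α a → SignedReach Ed Bd α b) : SignedReach Ed Bd u w := by
  have hαa : ∀ α, Ed u α → SignedReach Ed Bd α a := fun α hα =>
    huv.edge hα (symm hav) fun h => hau (symm h)
  by_cases hw : ∃ α, Ed u α ∧ ¬ Ed α w
  · obtain ⟨α, hα, hαw⟩ := hw
    exact (hab α (hαa α hα)).edge (symm hα) hbw hαw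
  push Not at hw
  by_cases hv : ∃ α, Ed u α ∧ ¬ Ed α v
  · obtain ⟨α, hα, hαv⟩ := hv
    exact (asymm hnc hvw ((hαa α hα).edge (hw α hα) hav hαv)).elim
  push Not at hv
  exact trans_of_forall_adj hBE hnc huv hvw fun α hα => ⟨hv α hα, hw α hα⟩

lemma trans_of_seedPair [Std.Symm Ed] [Std.Symm Bd] (hBE : Bd ≤ Ed)
    (hnc : ¬ HasChain Ed Bd) (hvw : SeedPair Ed Bd (v, w)) (huv : SignedReach Ed Bd u v) :
    SignedReach Ed Bd u w := by
  obtain ⟨z, hvz, hwz, hwz'⟩ := hvw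
  by_cases huz : Bd u z
  · exact of_seedPair ⟨z, huz, hwz, hwz'⟩
  by_cases huz' : Ed u z
  · exact (asymm hnc huv (of_seedPair ⟨z, hvz, huz', huz⟩)).elim
  exact trans_of_reroute hBE hnc huv (of_seedPair ⟨z, hvz, hwz, hwz'⟩) (symm (hBE _ _ hvz))
    (symm hwz) (fun h => huz' (symm h)) fun _ => id

lemma trans_of_signedPairArc [Std.Symm Ed] [Std.Symm Bd] (hBE : Bd ≤ Ed)
    (hnc : ¬ HasChain Ed Bd) {a b : V} (hab : SignedReach Ed Bd a b)
    (harc : SignedPairArc Ed Bd (a, b) (v, w))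
    (ih : ∀ α, SignedReach Ed Bd α a → SignedReach Ed Bd α b)
    (huv : SignedReach Ed Bd u v) : SignedReach Ed Bd u w := by
  have hvw : SignedReach Ed Bd v w := hab.tail harc
  rcases harc with ⟨hav, hbw, haw⟩ | ⟨hav, hbw, haw⟩
  · by_cases hau : Ed a u
    · exact hab.edge hau hbw haw
    · exact trans_of_reroute hBE hnc huv hvw hav hbw hau ih
  · by_cases hau : Bd a u
    · exact hab.bic hau hbw haw
    by_cases hau' : Ed a u
    · exact (asymm hnc huv (of_seedPair ⟨a, symm hav, symm hau', fun h => hau (symm h)⟩)).elim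
    · exact trans_of_reroute hBE hnc huv hvw (hBE _ _ hav) (hBE _ _ hbw) hau' ih

lemma trans [Std.Symm Ed] [Std.Symm Bd] (hBE : Bd ≤ Ed) (hnc : ¬ HasChain Ed Bd)
    (huv : SignedReach Ed Bd u v) (hvw : SignedReach Ed Bd v w) : SignedReach Ed Bd u w := by
  obtain ⟨p, hp, hw⟩ := hvw
  suffices ∀ q, ReflTransGen (SignedPairArc Ed Bd) p q →
      ∀ u, SignedReach Ed Bd u q.1 → SignedReach Ed Bd u q.2 from this _ hw u huv
  intro q hq
  induction hq with
  | refl => exact fun u => trans_of_seedPair hBE hnc hp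
  | tail hpq harc ih => exact fun u => trans_of_signedPairArc hBE hnc ⟨p, hp, hpq⟩ harc ih

end SignedReach

end SignedPairDigraph

lemma Fin.not_forall_rel_succ {α : Type*} {r : α → α → Prop}
    (htrans : ∀ {a b c}, r a b → r b c → r a c) (hirr : ∀ a, ¬ r a a) {n : ℕ}
    (x : Fin (n + 1) → α) : ¬ ∀ i, r (x i) (x (i + 1)) := by
  intro h
  have hx0 : ∀ i : Fin (n + 1), r (x 0) (x (i + 1)) := by
    refine Fin.induction (h 0) fun i hi => ?_
    rw [← Fin.coeSucc_eq_succ]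
    exact htrans hi (h _)
  exact hirr _ (by simpa using hx0 (Fin.last n))

instance (E : A → B → Prop) : Std.Symm (EdgeSum E) :=
  ⟨by rintro (a | b) (a' | b') h <;> exact h⟩

lemma edgeSum_le_edgeSum {E bic : A → B → Prop} (h : ∀ a b, bic a b → E a b) :
    EdgeSum bic ≤ EdgeSum E := by
  rintro (a | b) (a' | b') hab
  all_goals first | exact hab.elim | exact h _ _ hab

def Sum.toPairSum : (A × A) ⊕ (B × B) → (A ⊕ B) × (A ⊕ B) :=
  Sum.elim (Prod.map Sum.inl Sum.inl) (Prod.map Sum.inr Sum.inr)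

lemma seedPair_toPairSum {E bic : A → B → Prop} {p : (A × A) ⊕ (B × B)}
    (hp : p ∈ DZero E bic) : SeedPair (EdgeSum E) (EdgeSum bic) p.toPairSum := by
  rcases p with ⟨x, y⟩ | ⟨x, y⟩ <;> obtain ⟨z, hz⟩ := hp
  exacts [⟨.inr z, hz⟩, ⟨.inl z, hz⟩]

lemma pairArc_toPairSum {E : A → B → Prop} {p q : (A × A) ⊕ (B × B)} (h : PairDom E p q) :
    PairArc (EdgeSum E) p.toPairSum q.toPairSum := by
  rcases p with ⟨a, a'⟩ | ⟨b, b'⟩ <;> rcases q with ⟨c, c'⟩ | ⟨d, d'⟩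
  all_goals first | exact h.elim | exact h

lemma signedReach_of_mem_dClosure {E bic : A → B → Prop} {q : (A × A) ⊕ (B × B)}
    (hq : q ∈ DClosure E bic) :
    SignedReach (EdgeSum E) (EdgeSum bic) q.toPairSum.1 q.toPairSum.2 :=
  let ⟨_, hp, hw⟩ := hq
  ⟨_, seedPair_toPairSum hp,
    ReflTransGen.lift Sum.toPairSum (fun _ _ h => .inl (pairArc_toPairSum h)) _ _ hw⟩

theorem statement2_general (E bic : A → B → Prop)
    (hbic : ∀ a b, bic a b → E a b)
    (hnochain : ¬ HasChain (EdgeSum E) (EdgeSum bic)) :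
    ¬ HasCircuit (DClosure E bic) := by
  have hcirc : ∀ {n : ℕ} (y : Fin (n + 1) → A ⊕ B),
      ¬ ∀ i, SignedReach (EdgeSum E) (EdgeSum bic) (y i) (y (i + 1)) := fun y =>
    Fin.not_forall_rel_succ (r := SignedReach _ _)
      (SignedReach.trans (edgeSum_le_edgeSum hbic) hnochain)
      SignedReach.irrefl y
  rintro ⟨n, -, ⟨x, hx⟩ | ⟨x, hx⟩⟩
  · exact hcirc (Sum.inl ∘ x) fun i => signedReach_of_mem_dClosure (hx i)
  · exact hcirc (Sum.inr ∘ x) fun i => signedReach_of_mem_dClosure (hx i)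

/-- if a weakly balanced bipartite signed graph (no purely red edges)
has no chain, then the reachability closure `D` of `D_0` contains no circuit. -/
theorem statement2 [Fintype A] [Fintype B] (E bic : A → B → Prop)
    (hbic : ∀ a b, bic a b → E a b)
    (hnochain : ¬ HasChain (EdgeSum E) (EdgeSum bic)) :
    ¬ HasCircuit (DClosure E bic) :=
  statement2_general E bic hbic hnochain
end

section
/- Let Ĥ be a weakly balanced bipartite signed graph (no purely red edges), and let D be the reachability closure in H⁺ of the set D_0 of all pairs (x,y) such that some vertex z has a bicoloured edge zx and a blue edge zy. Then D contains a circuit if and only if Ĥ contains a flower. -/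
/-!
A pair `(v, w)` lies in `D` exactly when it is the pair of terminals `(l_k, u_k)` of some petal:
a petal with `k = 1` is a witness for `(l_1, u_1) ∈ D_0`, and extending both walks of a petal by
one step is exactly an arc of `H⁺`. A circuit in `D` is therefore a cyclic chain of petals, that
is, a flower; a flower with a single petal gives a circuit of length one, traversed twice.
-/

variable {A B : Type*}

/-- A petal in a signed graph with edge relation `E` and bicoloured edges `bic`:
a pair of walks `x, l_1, …, l_k` and `x, u_1, …, u_k` such that `xl_1` is bicoloured,
`xu_1` is blue, and `l_iu_{i+1}` is not an edge for `i = 1, …, k-1`. -/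
def IsPetal {V : Type*} (E bic : V → V → Prop) (x : V) (l u : ℕ → V) (k : ℕ) : Prop :=
  0 < k ∧ bic x (l 1) ∧ (E x (u 1) ∧ ¬ bic x (u 1)) ∧
    ∀ i, 1 ≤ i → i ≤ k - 1 →
      E (l i) (l (i + 1)) ∧ E (u i) (u (i + 1)) ∧ ¬ E (l i) (u (i + 1))

/-- A flower: a cyclically indexed collection of petals in which the upper terminal
of each petal equals the lower terminal of the next petal. -/
def HasFlower {V : Type*} (E bic : V → V → Prop) : Prop :=
  ∃ (n : ℕ) (x : Fin (n + 1) → V) (l u : Fin (n + 1) → ℕ → V) (k : Fin (n + 1) → ℕ),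
    (∀ i, IsPetal E bic (x i) (l i) (u i) (k i)) ∧
    ∀ i : Fin (n + 1), u i (k i) = l (i + 1) (k (i + 1))

lemma Fin.eq_zero_of_forall_eq_add_one {α : Type*} {n : ℕ} {f : Fin (n + 1) → α}
    (h : ∀ i, f i = f (i + 1)) (i : Fin (n + 1)) : f i = f 0 := by
  induction i using Fin.induction with
  | zero => rfl
  | succ i ih => rw [← Fin.coeSucc_eq_succ, ← h, ih]

lemma exists_pos_cycle_of_cycle {α : Type*} {r : α → α → Prop} {n : ℕ} {y : Fin (n + 1) → α}
    (hy : ∀ i, r (y i) (y (i + 1))) :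
    ∃ m, 0 < m ∧ ∃ y : Fin (m + 1) → α, ∀ i, r (y i) (y (i + 1)) := by
  rcases n with _ | n
  · exact ⟨1, one_pos, fun _ => y 0, fun _ => hy 0⟩
  · exact ⟨n + 1, n.succ_pos, y, hy⟩

section Petal

variable {V : Type*} {E bic : V → V → Prop}

lemma isPetal_one {x v w : V} (hv : bic x v) (hw : E x w) (hw' : ¬ bic x w) :
    IsPetal E bic x (fun _ => v) (fun _ => w) 1 :=
  ⟨one_pos, hv, ⟨hw, hw'⟩, fun i hi hi' => absurd (hi.trans hi') (by omega)⟩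

lemma IsPetal.extend {x : V} {l u : ℕ → V} {k : ℕ} (h : IsPetal E bic x l u k) {v w : V}
    (hv : E (l k) v) (hw : E (u k) w) (hvw : ¬ E (l k) w) :
    IsPetal E bic x (Function.update l (k + 1) v) (Function.update u (k + 1) w) (k + 1) := by
  obtain ⟨hk, hl, hu, hstep⟩ := h
  have h1 : (1 : ℕ) ≠ k + 1 := by omega
  refine ⟨k.succ_pos, by simpa [Function.update_of_ne h1] using hl,
    by simpa [Function.update_of_ne h1] using hu, fun i hi hik => ?_⟩
  rcases (Nat.lt_or_eq_of_le hik : i < k ∨ i = k) with hik | rfl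
  · simpa [Function.update_of_ne (show i ≠ k + 1 by omega),
      Function.update_of_ne (show i + 1 ≠ k + 1 by omega)] using hstep i hi (by omega)
  · simpa [Function.update_apply, show i ≠ i + 1 by omega] using ⟨hv, hw, hvw⟩

end Petal

def vertexPair : (A × A) ⊕ (B × B) → (A ⊕ B) × (A ⊕ B) :=
  Sum.elim (Prod.map Sum.inl Sum.inl) (Prod.map Sum.inr Sum.inr)

/-- The set `D` read as a relation on the vertices of `H`. -/
def DRel (E bic : A → B → Prop) (v w : A ⊕ B) : Prop :=
  ∃ q ∈ DClosure E bic, vertexPair q = (v, w)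

section DRel

variable {E bic : A → B → Prop}

@[simp]
lemma dRel_inl_inl {a a' : A} : DRel E bic (.inl a) (.inl a') ↔ .inl (a, a') ∈ DClosure E bic :=
  ⟨by rintro ⟨⟨_, _⟩ | _, hq, h⟩ <;> simp_all [vertexPair, Prod.map], fun h => ⟨_, h, rfl⟩⟩

@[simp]
lemma dRel_inr_inr {b b' : B} : DRel E bic (.inr b) (.inr b') ↔ .inr (b, b') ∈ DClosure E bic :=
  ⟨by rintro ⟨_ | ⟨_, _⟩, hq, h⟩ <;> simp_all [vertexPair, Prod.map], fun h => ⟨_, h, rfl⟩⟩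

lemma DRel.isLeft_eq {v w : A ⊕ B} (h : DRel E bic v w) : v.isLeft = w.isLeft := by
  obtain ⟨_ | _, -, h⟩ := h <;> simp only [vertexPair, Sum.elim_inl, Sum.elim_inr, Prod.map,
    Prod.mk.injEq] at h <;> simp [← h.1, ← h.2]

lemma dRel_of_bic {z v w : A ⊕ B} (hv : EdgeSum bic z v) (hw : EdgeSum E z w)
    (hw' : ¬ EdgeSum bic z w) : DRel E bic v w := by
  rcases z with a | b <;> rcases v with a₁ | b₁ <;> rcases w with a₂ | b₂ <;>
    simp only [EdgeSum] at hv hw hw'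
  · exact ⟨.inr (b₁, b₂), ⟨.inr (b₁, b₂), ⟨a, hv, hw, hw'⟩, .refl⟩, rfl⟩
  · exact ⟨.inl (a₁, a₂), ⟨.inl (a₁, a₂), ⟨b, hv, hw, hw'⟩, .refl⟩, rfl⟩

lemma DRel.step {v w v' w' : A ⊕ B} (h : DRel E bic v w) (hv : EdgeSum E v v')
    (hw : EdgeSum E w w') (hvw : ¬ EdgeSum E v w') : DRel E bic v' w' := by
  obtain ⟨q, ⟨p, hp, hpq⟩, hq⟩ := h
  rcases q with ⟨a₁, a₂⟩ | ⟨b₁, b₂⟩ <;> simp only [vertexPair, Sum.elim_inl, Sum.elim_inr,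
    Prod.map, Prod.mk.injEq] at hq <;> obtain ⟨rfl, rfl⟩ := hq <;>
    rcases v' with a | b <;> rcases w' with a' | b' <;> simp only [EdgeSum] at hv hw hvw
  · exact ⟨.inr (b, b'), ⟨p, hp, hpq.tail ⟨hv, hw, hvw⟩⟩, rfl⟩
  · exact ⟨.inl (a, a'), ⟨p, hp, hpq.tail ⟨hv, hw, hvw⟩⟩, rfl⟩

@[elab_as_elim]
lemma DRel.induction {R : A ⊕ B → A ⊕ B → Prop}
    (base : ∀ z v w, EdgeSum bic z v → EdgeSum E z w → ¬ EdgeSum bic z w → R v w)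
    (step : ∀ v w v' w', R v w → EdgeSum E v v' → EdgeSum E w w' → ¬ EdgeSum E v w' → R v' w')
    {v w : A ⊕ B} (h : DRel E bic v w) : R v w := by
  obtain ⟨q, ⟨p, hp, hpq⟩, hq⟩ := h
  suffices R (vertexPair q).1 (vertexPair q).2 by rwa [hq] at this
  clear hq
  induction hpq with
  | refl =>
    rcases p with ⟨a, a'⟩ | ⟨b, b'⟩ <;> obtain ⟨z, hv, hw, hw'⟩ := hp
    exacts [base (.inr z) _ _ hv hw hw', base (.inl z) _ _ hv hw hw']
  | @tail q₁ q₂ _ hdom ih =>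
    rcases q₁ with ⟨a, a'⟩ | ⟨b, b'⟩ <;> rcases q₂ with ⟨c, c'⟩ | ⟨c, c'⟩
    all_goals first
      | exact hdom.elim
      | exact step _ _ _ _ ih hdom.1 hdom.2.1 hdom.2.2

lemma exists_isPetal_of_dRel {v w : A ⊕ B} (h : DRel E bic v w) :
    ∃ x l u k, IsPetal (EdgeSum E) (EdgeSum bic) x l u k ∧ l k = v ∧ u k = w := by
  refine DRel.induction (fun z v w hv hw hw' => ?_) (fun v w v' w' ih hv hw hvw => ?_) h
  · exact ⟨z, _, _, 1, isPetal_one hv hw hw', rfl, rfl⟩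
  · obtain ⟨x, l, u, k, hpetal, rfl, rfl⟩ := ih
    exact ⟨x, _, _, k + 1, hpetal.extend hv hw hvw, by simp, by simp⟩

lemma IsPetal.dRel {x : A ⊕ B} {l u : ℕ → A ⊕ B} {k : ℕ}
    (h : IsPetal (EdgeSum E) (EdgeSum bic) x l u k) : DRel E bic (l k) (u k) := by
  obtain ⟨hk, hl, ⟨hu, hu'⟩, hstep⟩ := h
  induction k, hk using Nat.le_induction with
  | base => exact dRel_of_bic hl hu hu'
  | succ k hk ih =>
    obtain ⟨hl', hu'', hlu⟩ := hstep k hk (by omega)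
    exact (ih fun i hi hik => hstep i hi (by omega)).step hl' hu'' hlu

lemma hasCircuit_iff_exists_dRel_cycle :
    HasCircuit (DClosure E bic) ↔
      ∃ (n : ℕ) (y : Fin (n + 1) → A ⊕ B), ∀ i, DRel E bic (y i) (y (i + 1)) := by
  constructor
  · rintro ⟨n, -, ⟨x, hx⟩ | ⟨x, hx⟩⟩
    exacts [⟨n, fun i => .inl (x i), by simpa using hx⟩,
      ⟨n, fun i => .inr (x i), by simpa using hx⟩]
  · rintro ⟨n, y, hy⟩
    obtain ⟨n, hn, y, hy⟩ := exists_pos_cycle_of_cycle hy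
    have hside : ∀ i, (y i).isLeft = (y 0).isLeft :=
      Fin.eq_zero_of_forall_eq_add_one fun i => (hy i).isLeft_eq
    cases h0 : (y 0).isLeft
    · choose x hx using fun i => Sum.isRight_iff.1 (Sum.isLeft_eq_false.1 ((hside i).trans h0))
      refine ⟨n, hn, .inr ⟨x, fun i => ?_⟩⟩
      simpa [hx] using hy i
    · choose x hx using fun i => Sum.isLeft_iff.1 ((hside i).trans h0)
      refine ⟨n, hn, .inl ⟨x, fun i => ?_⟩⟩
      simpa [hx] using hy i

end DRel

theorem statement6_general (E bic : A → B → Prop) :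
    HasCircuit (DClosure E bic) ↔ HasFlower (EdgeSum E) (EdgeSum bic) := by
  rw [hasCircuit_iff_exists_dRel_cycle]
  constructor
  · rintro ⟨n, y, hy⟩
    choose x l u k hpetal hl hu using fun i => exists_isPetal_of_dRel (hy i)
    exact ⟨n, x, l, u, k, hpetal, fun i => (hu i).trans (hl (i + 1)).symm⟩
  · rintro ⟨n, x, l, u, k, hpetal, hterminal⟩
    exact ⟨n, fun i => l i (k i), fun i => by simpa only [hterminal i] using (hpetal i).dRel⟩

/-- for a weakly balanced bipartite signed graph (no purely red edges),
the reachability closure `D` of `D_0` contains a circuit if and only if the signed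
graph contains a flower. -/
theorem statement6 [Fintype A] [Fintype B] (E bic : A → B → Prop)
    (hbic : ∀ a b, bic a b → E a b) :
    HasCircuit (DClosure E bic) ↔ HasFlower (EdgeSum E) (EdgeSum bic) :=
  statement6_general E bic
end

section
/- Let Ĥ be a weakly balanced bipartite signed graph with a special min ordering ≤, and let Ĝ be a bipartite signed graph without purely red edges. Suppose C is a closed walk in Ĝ and f, f' are two homomorphisms of Ĝ to Ĥ such that f(v) ≤ f'(v) for all vertices v of Ĝ, every edge of f(C) is blue, and some edge of f'(C) is bicoloured. Then the sets of vertices of the closed walks f(C) and f'(C) are disjoint. -/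
/-!
Call a bicoloured edge `γδ` of `Ĥ` separating at an edge `xy` of the walk if
`f x < γ ≤ f' x` and `f y < δ ≤ f' y`. At an edge whose `f'`-image is bicoloured, that image
separates, since a blue edge weakly below a bicoloured edge lies strictly below it. Passing to an
adjacent edge of the walk, the special min ordering lets us either keep `γδ` or lower one of its
ends to the new `f'`-vertex, so every edge of the walk has a separating edge. In the same way a
bicoloured edge lying strictly above one (blue) `f`-edge lies strictly above all of them. Hence
`f x < γ ≤ f' x'` for all vertices `x`, `x'` of the walk in the same part.
-/

variable {A B U W : Type*}

/-- A min ordering of a bipartite graph: a pair of linear (strict total) orders on the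
two parts such that if `ab`, `a'b'` are edges with `a <_A a'` and `b' <_B b`, then `ab'`
is an edge. -/
def IsMinOrdering (E : A → B → Prop) (ltA : A → A → Prop) (ltB : B → B → Prop) : Prop :=
  IsStrictTotalOrder A ltA ∧ IsStrictTotalOrder B ltB ∧
    ∀ a a' b b', E a b → E a' b' → ltA a a' → ltB b' b → E a b'

/-- A special min ordering of a weakly balanced bipartite signed graph: a min ordering
such that at each vertex all bicoloured neighbours precede all blue neighbours. -/
def IsSpecialMinOrdering (E bic : A → B → Prop)
    (ltA : A → A → Prop) (ltB : B → B → Prop) : Prop :=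
  IsMinOrdering E ltA ltB ∧
    (∀ (a : A) (b b' : B), bic a b → E a b' → ¬ bic a b' → ltB b b') ∧
    (∀ (b : B) (a a' : A), bic a b → E a' b → ¬ bic a' b → ltA a a')

theorem IsMinOrdering.flip {E : A → B → Prop} {ltA : A → A → Prop} {ltB : B → B → Prop}
    (h : IsMinOrdering E ltA ltB) : IsMinOrdering (flip E) ltB ltA :=
  ⟨h.2.1, h.1, fun _ _ _ _ hba hba' hb ha => h.2.2 _ _ _ _ hba' hba ha hb⟩

theorem IsSpecialMinOrdering.flip {E bic : A → B → Prop} {ltA : A → A → Prop}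
    {ltB : B → B → Prop} (h : IsSpecialMinOrdering E bic ltA ltB) :
    IsSpecialMinOrdering (flip E) (flip bic) ltB ltA :=
  ⟨h.1.flip, h.2.2, h.2.1⟩

section Walk

def IsWalkEdge (p : ℕ → U) (q : ℕ → W) (m : ℕ) (x : U) (y : W) : Prop :=
  ∃ i < m, (x = p i ∨ x = p (i + 1)) ∧ y = q i

variable {p : ℕ → U} {q : ℕ → W} {m : ℕ}

theorem forall_isWalkEdge_of_congr {P : U → W → Prop}
    (hleft : ∀ x x' y, IsWalkEdge p q m x y → IsWalkEdge p q m x' y → (P x y ↔ P x' y))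
    (hright : ∀ x y y', IsWalkEdge p q m x y → IsWalkEdge p q m x y' → (P x y ↔ P x y'))
    {x₀ : U} {y₀ : W} (h₀ : IsWalkEdge p q m x₀ y₀) (hP₀ : P x₀ y₀)
    {x : U} {y : W} (h : IsWalkEdge p q m x y) : P x y := by
  have hstep : ∀ i, i + 1 < m → (P (p i) (q i) ↔ P (p (i + 1)) (q (i + 1))) := fun i hi =>
    (hleft _ _ _ ⟨i, by omega, Or.inl rfl, rfl⟩ ⟨i, by omega, Or.inr rfl, rfl⟩).trans
      (hright _ _ _ ⟨i, by omega, Or.inr rfl, rfl⟩ ⟨i + 1, hi, Or.inl rfl, rfl⟩)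
  have hzero : ∀ i < m, (P (p i) (q i) ↔ P (p 0) (q 0)) := by
    intro i hi
    induction i with
    | zero => rfl
    | succ i ih => exact (hstep i hi).symm.trans (ih (by omega))
  have hconst : ∀ x y, IsWalkEdge p q m x y → (P x y ↔ P (p 0) (q 0)) := by
    rintro x _ ⟨i, hi, hx, rfl⟩
    exact (hleft _ _ _ ⟨i, hi, hx, rfl⟩ ⟨i, hi, Or.inl rfl, rfl⟩).trans (hzero i hi)
  exact (hconst x y h).2 ((hconst x₀ y₀ h₀).1 hP₀)

theorem exists_isWalkEdge_left (hm : 0 < m) {i : ℕ} (hi : i ≤ m) :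
    ∃ y, IsWalkEdge p q m (p i) y := by
  rcases hi.lt_or_eq with hi | rfl
  · exact ⟨q i, i, hi, Or.inl rfl, rfl⟩
  · exact ⟨q (i - 1), i - 1, by omega, Or.inr (by rw [Nat.sub_add_cancel hm]), rfl⟩

end Walk

section LinearOrder

variable [LinearOrder A] [LinearOrder B] {p : ℕ → U} {q : ℕ → W} {m : ℕ}
  {E bic : A → B → Prop}

theorem IsMinOrdering.adj_of_le (h : IsMinOrdering E (· < ·) (· < ·)) {a a' : A} {b b' : B}
    (hab : E a b) (hab' : E a' b') (ha : a ≤ a') (hb : b' ≤ b) : E a b' := by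
  rcases ha.eq_or_lt with rfl | ha
  · exact hab'
  rcases hb.eq_or_lt with rfl | hb
  · exact hab
  exact h.2.2 _ _ _ _ hab hab' ha hb

theorem IsSpecialMinOrdering.lt_and_lt_of_blue_of_bic
    (hH : IsSpecialMinOrdering E bic (· < ·) (· < ·)) {a a' : A} {b b' : B}
    (hab : E a b) (hab_blue : ¬ bic a b) (hbic : bic a' b') (ha : a ≤ a') (hb : b ≤ b') :
    a < a' ∧ b < b' := by
  constructor
  · refine ha.lt_of_ne ?_
    rintro rfl
    exact (hH.2.1 _ _ _ hbic hab hab_blue).not_ge hb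
  · refine hb.lt_of_ne ?_
    rintro rfl
    exact (hH.2.2 _ _ _ hbic hab hab_blue).not_ge ha

theorem IsSpecialMinOrdering.lt_of_blue_of_blue
    (hbicE : ∀ a b, bic a b → E a b) (hH : IsSpecialMinOrdering E bic (· < ·) (· < ·))
    {a c γ : A} {b δ : B} (hγδ : bic γ δ) (hab : E a b) (hab_blue : ¬ bic a b)
    (hcb : E c b) (haγ : a < γ) (hbδ : b < δ) : c < γ := by
  by_contra! hγc
  have hγb : E γ b := hH.1.adj_of_le (hbicE _ _ hγδ) hcb hγc hbδ.le
  by_cases hγb_bic : bic γ b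
  · exact (hH.2.2 _ _ _ hγb_bic hab hab_blue).not_gt haγ
  · exact (hH.2.1 _ _ _ hγδ hγb hγb_bic).not_gt hbδ

theorem IsSpecialMinOrdering.lt_and_lt_iff_left
    (hbicE : ∀ a b, bic a b → E a b) (hH : IsSpecialMinOrdering E bic (· < ·) (· < ·))
    {a c γ : A} {b δ : B} (hγδ : bic γ δ) (hab : E a b) (hab_blue : ¬ bic a b)
    (hcb : E c b) (hcb_blue : ¬ bic c b) : a < γ ∧ b < δ ↔ c < γ ∧ b < δ :=
  ⟨fun h => ⟨hH.lt_of_blue_of_blue hbicE hγδ hab hab_blue hcb h.1 h.2, h.2⟩,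
    fun h => ⟨hH.lt_of_blue_of_blue hbicE hγδ hcb hcb_blue hab h.1 h.2, h.2⟩⟩

theorem IsSpecialMinOrdering.lt_and_lt_iff_right
    (hbicE : ∀ a b, bic a b → E a b) (hH : IsSpecialMinOrdering E bic (· < ·) (· < ·))
    {a γ : A} {b d δ : B} (hγδ : bic γ δ) (hab : E a b) (hab_blue : ¬ bic a b)
    (had : E a d) (had_blue : ¬ bic a d) : a < γ ∧ b < δ ↔ a < γ ∧ d < δ := by
  rw [and_comm, and_comm (a := a < γ)]
  exact hH.flip.lt_and_lt_iff_left (fun b a => hbicE a b) hγδ hab hab_blue had had_blue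

def SeparatedByBic (bic : A → B → Prop) (a : A) (b : B) (a' : A) (b' : B) : Prop :=
  ∃ γ δ, bic γ δ ∧ a < γ ∧ γ ≤ a' ∧ b < δ ∧ δ ≤ b'

theorem separatedByBic_flip {bic : A → B → Prop} {a a' : A} {b b' : B} :
    SeparatedByBic (flip bic) b a b' a' ↔ SeparatedByBic bic a b a' b' := by
  constructor <;> rintro ⟨γ, δ, hγδ, h₁, h₂, h₃, h₄⟩ <;> exact ⟨δ, γ, hγδ, h₃, h₄, h₁, h₂⟩

theorem IsSpecialMinOrdering.separatedByBic_left
    (hbicE : ∀ a b, bic a b → E a b) (hH : IsSpecialMinOrdering E bic (· < ·) (· < ·))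
    {a a' c c' : A} {b b' : B} (hab : E a b) (hab_blue : ¬ bic a b)
    (hcb : E c b) (hcb_blue : ¬ bic c b) (hc'b' : E c' b') (hc : c ≤ c')
    (hsep : SeparatedByBic bic a b a' b') : SeparatedByBic bic c b c' b' := by
  obtain ⟨γ, δ, hγδ, haγ, -, hbδ, hδb'⟩ := hsep
  have hcγ := hH.lt_of_blue_of_blue hbicE hγδ hab hab_blue hcb haγ hbδ
  rcases le_or_gt γ c' with hγc' | hc'γ
  · exact ⟨γ, δ, hγδ, hcγ, hγc', hbδ, hδb'⟩
  -- otherwise `c'δ` is an edge below `γδ`, hence bicoloured, and it replaces `γδ`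
  have hc'δ : E c' δ := hH.1.adj_of_le hc'b' (hbicE _ _ hγδ) hc'γ.le hδb'
  have hc'δ_bic : bic c' δ := by
    by_contra hblue
    exact (hH.2.2 _ _ _ hγδ hc'δ hblue).not_gt hc'γ
  exact ⟨c', δ, hc'δ_bic,
    (hH.lt_and_lt_of_blue_of_bic hcb hcb_blue hc'δ_bic hc hbδ.le).1, le_rfl, hbδ, hδb'⟩

theorem IsSpecialMinOrdering.separatedByBic_iff_left
    (hbicE : ∀ a b, bic a b → E a b) (hH : IsSpecialMinOrdering E bic (· < ·) (· < ·))
    {a a' c c' : A} {b b' : B} (hab : E a b) (hab_blue : ¬ bic a b) (ha'b' : E a' b')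
    (ha : a ≤ a') (hcb : E c b) (hcb_blue : ¬ bic c b) (hc'b' : E c' b') (hc : c ≤ c') :
    SeparatedByBic bic a b a' b' ↔ SeparatedByBic bic c b c' b' :=
  ⟨hH.separatedByBic_left hbicE hab hab_blue hcb hcb_blue hc'b' hc,
    hH.separatedByBic_left hbicE hcb hcb_blue hab hab_blue ha'b' ha⟩

theorem IsSpecialMinOrdering.separatedByBic_iff_right
    (hbicE : ∀ a b, bic a b → E a b) (hH : IsSpecialMinOrdering E bic (· < ·) (· < ·))
    {a a' : A} {b b' d d' : B} (hab : E a b) (hab_blue : ¬ bic a b) (ha'b' : E a' b')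
    (hb : b ≤ b') (had : E a d) (had_blue : ¬ bic a d) (ha'd' : E a' d') (hd : d ≤ d') :
    SeparatedByBic bic a b a' b' ↔ SeparatedByBic bic a d a' d' := by
  rw [← separatedByBic_flip (b := b), ← separatedByBic_flip (b := d)]
  exact hH.flip.separatedByBic_iff_left (fun b a => hbicE a b) hab hab_blue ha'b' hb
    had had_blue ha'd' hd

theorem IsSpecialMinOrdering.lt_of_isWalkEdge
    (hbicE : ∀ a b, bic a b → E a b) (hH : IsSpecialMinOrdering E bic (· < ·) (· < ·))
    {fA f'A : U → A} {fB f'B : W → B}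
    (hblue : ∀ x y, IsWalkEdge p q m x y → E (fA x) (fB y) ∧ ¬ bic (fA x) (fB y))
    (hf' : ∀ x y, IsWalkEdge p q m x y → E (f'A x) (f'B y))
    (hleA : ∀ x, fA x ≤ f'A x) (hleB : ∀ y, fB y ≤ f'B y)
    {x₀ : U} {y₀ : W} (h₀ : IsWalkEdge p q m x₀ y₀) (hbic₀ : bic (f'A x₀) (f'B y₀))
    {x x' : U} {y y' : W} (hxy : IsWalkEdge p q m x y) (hx'y' : IsWalkEdge p q m x' y') :
    fA x < f'A x' ∧ fB y < f'B y' := by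
  have hsep : SeparatedByBic bic (fA x') (fB y') (f'A x') (f'B y') := by
    refine forall_isWalkEdge_of_congr
      (P := fun x y => SeparatedByBic bic (fA x) (fB y) (f'A x) (f'B y))
      (fun x x' y hxy hx'y => ?_) (fun x y y' hxy hxy' => ?_) h₀ ?_ hx'y'
    · exact hH.separatedByBic_iff_left hbicE (hblue _ _ hxy).1 (hblue _ _ hxy).2
        (hf' _ _ hxy) (hleA x) (hblue _ _ hx'y).1 (hblue _ _ hx'y).2 (hf' _ _ hx'y) (hleA x')
    · exact hH.separatedByBic_iff_right hbicE (hblue _ _ hxy).1 (hblue _ _ hxy).2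
        (hf' _ _ hxy) (hleB y) (hblue _ _ hxy').1 (hblue _ _ hxy').2 (hf' _ _ hxy') (hleB y')
    · obtain ⟨hA, hB⟩ := hH.lt_and_lt_of_blue_of_bic (hblue _ _ h₀).1 (hblue _ _ h₀).2 hbic₀
        (hleA x₀) (hleB y₀)
      exact ⟨_, _, hbic₀, hA, le_rfl, hB, le_rfl⟩
  obtain ⟨γ, δ, hγδ, hx'γ, hγx', hy'δ, hδy'⟩ := hsep
  have hbelow : fA x < γ ∧ fB y < δ := by
    refine forall_isWalkEdge_of_congr (P := fun x y => fA x < γ ∧ fB y < δ)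
      (fun x x' y hxy hx'y => ?_) (fun x y y' hxy hxy' => ?_) hx'y' ⟨hx'γ, hy'δ⟩ hxy
    · exact hH.lt_and_lt_iff_left hbicE hγδ (hblue _ _ hxy).1 (hblue _ _ hxy).2
        (hblue _ _ hx'y).1 (hblue _ _ hx'y).2
    · exact hH.lt_and_lt_iff_right hbicE hγδ (hblue _ _ hxy).1 (hblue _ _ hxy).2
        (hblue _ _ hxy').1 (hblue _ _ hxy').2
  exact ⟨hbelow.1.trans_le hγx', hbelow.2.trans_le hδy'⟩

end LinearOrder

theorem statement8_general
    (E bic : A → B → Prop) (hbic : ∀ a b, bic a b → E a b)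
    (ltA : A → A → Prop) (ltB : B → B → Prop)
    (hspecial : IsSpecialMinOrdering E bic ltA ltB)
    (EG : U → W → Prop)
    (fA f'A : U → A) (fB f'B : W → B)
    (hf : ∀ u w, EG u w → E (fA u) (fB w))
    (hf' : ∀ u w, EG u w → E (f'A u) (f'B w))
    (hleA : ∀ u, fA u = f'A u ∨ ltA (fA u) (f'A u))
    (hleB : ∀ w, fB w = f'B w ∨ ltB (fB w) (f'B w))
    (m : ℕ) (p : ℕ → U) (q : ℕ → W)
    (hpq : ∀ i < m, EG (p i) (q i)) (hqp : ∀ i < m, EG (p (i + 1)) (q i))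
    (hblue : ∀ i < m, ¬ bic (fA (p i)) (fB (q i)) ∧ ¬ bic (fA (p (i + 1))) (fB (q i)))
    (hbicol : ∃ i < m, bic (f'A (p i)) (f'B (q i)) ∨ bic (f'A (p (i + 1))) (f'B (q i))) :
    (∀ i ≤ m, ∀ j ≤ m, fA (p i) ≠ f'A (p j)) ∧
    (∀ i < m, ∀ j < m, fB (q i) ≠ f'B (q j)) := by
  classical
  have := hspecial.1.1
  have := hspecial.1.2.1
  -- these orders have `<` = `ltA`, `ltB` and `≤` = `(· = ·) ∨ (· < ·)`, so `hleA`, `hleB` read `≤`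
  let _ := linearOrderOfSTO ltA
  let _ := linearOrderOfSTO ltB
  have hEG : ∀ x y, IsWalkEdge p q m x y → EG x y := by
    rintro x _ ⟨i, hi, rfl | rfl, rfl⟩
    exacts [hpq i hi, hqp i hi]
  have hfblue : ∀ x y, IsWalkEdge p q m x y → E (fA x) (fB y) ∧ ¬ bic (fA x) (fB y) := by
    rintro x _ ⟨i, hi, rfl | rfl, rfl⟩
    exacts [⟨hf _ _ (hpq i hi), (hblue i hi).1⟩, ⟨hf _ _ (hqp i hi), (hblue i hi).2⟩]
  obtain ⟨i₀, hi₀, hbic₀⟩ := hbicol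
  obtain ⟨x₀, y₀, h₀, hbic₀⟩ : ∃ x y, IsWalkEdge p q m x y ∧ bic (f'A x) (f'B y) := by
    rcases hbic₀ with h | h
    exacts [⟨_, _, ⟨i₀, hi₀, Or.inl rfl, rfl⟩, h⟩, ⟨_, _, ⟨i₀, hi₀, Or.inr rfl, rfl⟩, h⟩]
  have hlt {x x' y y'} (hxy : IsWalkEdge p q m x y) (hx'y' : IsWalkEdge p q m x' y') :
      fA x < f'A x' ∧ fB y < f'B y' :=
    hspecial.lt_of_isWalkEdge hbic hfblue (fun x y h => hf' _ _ (hEG x y h)) hleA hleB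
      h₀ hbic₀ hxy hx'y'
  refine ⟨fun i hi j hj => ?_, fun i hi j hj => ?_⟩
  · obtain ⟨y, hy⟩ := exists_isWalkEdge_left (by omega) hi
    obtain ⟨y', hy'⟩ := exists_isWalkEdge_left (by omega) hj
    exact (hlt hy hy').1.ne
  · exact (hlt ⟨i, hi, Or.inl rfl, rfl⟩ ⟨j, hj, Or.inl rfl, rfl⟩).2.ne

/-- Let `Ĥ` (parts `A`, `B`, edges `E`, bicoloured edges `bic`) be a weakly
balanced bipartite signed graph with a special min ordering, and `Ĝ` (parts `U`, `W`,
edges `EG`, bicoloured edges `bicG`) a bipartite signed graph without purely red edges.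
Let `C` be a closed walk `p_0, q_0, p_1, q_1, …, q_{m-1}, p_m = p_0` in `Ĝ` and let
`f = (fA, fB)`, `f' = (f'A, f'B)` be homomorphisms of `Ĝ` to `Ĥ` with `f(v) ≤ f'(v)`
for every vertex `v`, such that every edge of `f(C)` is blue and some edge of `f'(C)`
is bicoloured.  Then the vertex sets of `f(C)` and `f'(C)` are disjoint. -/
theorem statement8 [Fintype A] [Fintype B] [Fintype U] [Fintype W]
    (E bic : A → B → Prop) (hbic : ∀ a b, bic a b → E a b)
    (ltA : A → A → Prop) (ltB : B → B → Prop)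
    (hspecial : IsSpecialMinOrdering E bic ltA ltB)
    (EG bicG : U → W → Prop) (hbicG : ∀ u w, bicG u w → EG u w)
    (fA f'A : U → A) (fB f'B : W → B)
    (hf : ∀ u w, EG u w → E (fA u) (fB w))
    (hfbic : ∀ u w, bicG u w → bic (fA u) (fB w))
    (hf' : ∀ u w, EG u w → E (f'A u) (f'B w))
    (hf'bic : ∀ u w, bicG u w → bic (f'A u) (f'B w))
    (hleA : ∀ u, fA u = f'A u ∨ ltA (fA u) (f'A u))
    (hleB : ∀ w, fB w = f'B w ∨ ltB (fB w) (f'B w))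
    (m : ℕ) (hm : 0 < m) (p : ℕ → U) (q : ℕ → W)
    (hpq : ∀ i < m, EG (p i) (q i)) (hqp : ∀ i < m, EG (p (i + 1)) (q i))
    (hclosed : p m = p 0)
    (hblue : ∀ i < m, ¬ bic (fA (p i)) (fB (q i)) ∧ ¬ bic (fA (p (i + 1))) (fB (q i)))
    (hbicol : ∃ i < m, bic (f'A (p i)) (f'B (q i)) ∨ bic (f'A (p (i + 1))) (f'B (q i))) :
    (∀ i ≤ m, ∀ j ≤ m, fA (p i) ≠ f'A (p j)) ∧
    (∀ i < m, ∀ j < m, fB (q i) ≠ f'B (q j)) :=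
  statement8_general E bic hbic ltA ltB hspecial EG fA f'A fB f'B hf hf' hleA hleB m p q hpq hqp
    hblue hbicol
end

section
/- Let Ĥ be a weakly balanced bipartite signed graph with a special min ordering ≤, let Ĝ be a bipartite signed graph without purely red edges, let C be a closed walk in Ĝ, and let f, f' be homomorphisms of Ĝ to Ĥ with f(v) ≤ f'(v) for all vertices v, such that every edge of f(C) is blue and some edge of f'(C) is bicoloured. Then there exist a blue edge ab of f(C) and a bicoloured edge uv of f'(C) (with a, u in part A and b, v in part B) such that a < u and b < v. -/
variable {A B U W : Type*}

/-- Core step: if `ab` is a blue edge, `uv` is bicoloured, `a ≤ u` and `b ≤ v`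
(in the sense of the strict orders), then both inequalities are strict. -/
lemma statement9_core (E bic : A → B → Prop)
    (ltA : A → A → Prop) (ltB : B → B → Prop)
    (hspecial : IsSpecialMinOrdering E bic ltA ltB)
    (a u : A) (b v : B) (hE : E a b) (hnb : ¬ bic a b) (hbv : bic u v)
    (hA : a = u ∨ ltA a u) (hB : b = v ∨ ltB b v) :
    ltA a u ∧ ltB b v := by
  obtain ⟨⟨hSA, hSB, _⟩, hsp1, hsp2⟩ := hspecial
  haveI := hSA; haveI := hSB
  have hBlt : ltB b v := by
    rcases hB with hB | hB
    · subst hB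
      rcases hA with hA | hA
      · subst hA; exact absurd hbv hnb
      · exact absurd (hsp2 b u a hbv hE hnb) (asymm hA)
    · exact hB
  refine ⟨?_, hBlt⟩
  rcases hA with hA | hA
  · subst hA
    exact absurd (hsp1 a v b hbv hE hnb) (asymm hBlt)
  · exact hA

/-- with `Ĥ`, `Ĝ`, the closed walk `C` (written
`p_0, q_0, p_1, q_1, …, q_{m-1}, p_m = p_0`), and homomorphisms `f ≤ f'` as in
Statement 8 (every edge of `f(C)` blue, some edge of `f'(C)` bicoloured), there exist
a blue edge `ab` of `f(C)` and a bicoloured edge `uv` of `f'(C)` (with `a, u ∈ A`,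
`b, v ∈ B`) such that `a < u` and `b < v`. -/
theorem statement9 [Fintype A] [Fintype B] [Fintype U] [Fintype W]
    (E bic : A → B → Prop) (hbic : ∀ a b, bic a b → E a b)
    (ltA : A → A → Prop) (ltB : B → B → Prop)
    (hspecial : IsSpecialMinOrdering E bic ltA ltB)
    (EG bicG : U → W → Prop) (hbicG : ∀ u w, bicG u w → EG u w)
    (fA f'A : U → A) (fB f'B : W → B)
    (hf : ∀ u w, EG u w → E (fA u) (fB w))
    (hfbic : ∀ u w, bicG u w → bic (fA u) (fB w))
    (hf' : ∀ u w, EG u w → E (f'A u) (f'B w))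
    (hf'bic : ∀ u w, bicG u w → bic (f'A u) (f'B w))
    (hleA : ∀ u, fA u = f'A u ∨ ltA (fA u) (f'A u))
    (hleB : ∀ w, fB w = f'B w ∨ ltB (fB w) (f'B w))
    (m : ℕ) (hm : 0 < m) (p : ℕ → U) (q : ℕ → W)
    (hpq : ∀ i < m, EG (p i) (q i)) (hqp : ∀ i < m, EG (p (i + 1)) (q i))
    (hclosed : p m = p 0)
    (hblue : ∀ i < m, ¬ bic (fA (p i)) (fB (q i)) ∧ ¬ bic (fA (p (i + 1))) (fB (q i)))
    (hbicol : ∃ i < m, bic (f'A (p i)) (f'B (q i)) ∨ bic (f'A (p (i + 1))) (f'B (q i))) :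
    ∃ (a u : A) (b v : B),
      (∃ i < m, (a = fA (p i) ∧ b = fB (q i)) ∨ (a = fA (p (i + 1)) ∧ b = fB (q i))) ∧
      ¬ bic a b ∧
      (∃ j < m, (u = f'A (p j) ∧ v = f'B (q j)) ∨ (u = f'A (p (j + 1)) ∧ v = f'B (q j))) ∧
      bic u v ∧ ltA a u ∧ ltB b v := by
  obtain ⟨j, hj, hcase⟩ := hbicol
  rcases hcase with hbv | hbv
  · obtain ⟨h1, h2⟩ := statement9_core E bic ltA ltB hspecial
      (fA (p j)) (f'A (p j)) (fB (q j)) (f'B (q j))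
      (hf _ _ (hpq j hj)) (hblue j hj).1 hbv (hleA _) (hleB _)
    exact ⟨fA (p j), f'A (p j), fB (q j), f'B (q j),
      ⟨j, hj, Or.inl ⟨rfl, rfl⟩⟩, (hblue j hj).1,
      ⟨j, hj, Or.inl ⟨rfl, rfl⟩⟩, hbv, h1, h2⟩
  · obtain ⟨h1, h2⟩ := statement9_core E bic ltA ltB hspecial
      (fA (p (j + 1))) (f'A (p (j + 1))) (fB (q j)) (f'B (q j))
      (hf _ _ (hqp j hj)) (hblue j hj).2 hbv (hleA _) (hleB _)
    exact ⟨fA (p (j + 1)), f'A (p (j + 1)), fB (q j), f'B (q j),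
      ⟨j, hj, Or.inr ⟨rfl, rfl⟩⟩, (hblue j hj).2,
      ⟨j, hj, Or.inr ⟨rfl, rfl⟩⟩, hbv, h1, h2⟩
end

section
/- Let Ĥ be a weakly balanced bipartite signed graph with a special min ordering. Then there do not exist vertices a, d, c in part A and b, e in part B and edges ab, bc, de of Ĥ with a < d < c and b < e, such that ab is blue and de is bicoloured. -/
variable {A B : Type*}

/-- in a weakly balanced bipartite signed graph with a special min
ordering there do not exist vertices `a, d, c ∈ A`, `b, e ∈ B` and edges `ab`, `bc`,
`de` with `a < d < c` and `b < e`, such that `ab` is blue and `de` is bicoloured. -/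
theorem statement10 [Fintype A] [Fintype B] (E bic : A → B → Prop)
    (hbic : ∀ a b, bic a b → E a b)
    (ltA : A → A → Prop) (ltB : B → B → Prop)
    (hspecial : IsSpecialMinOrdering E bic ltA ltB) :
    ¬ ∃ (a d c : A) (b e : B),
        E a b ∧ E c b ∧ E d e ∧
        ltA a d ∧ ltA d c ∧ ltB b e ∧
        ¬ bic a b ∧ bic d e := by
  rintro ⟨a, d, c, b, e, hab, hcb, hde, had, hdc, hbe, hblue, hbicde⟩
  obtain ⟨⟨hA, hB, hmin⟩, hspB, hspA⟩ := hspecial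
  have hdb : E d b := hmin d c e b hde hcb hdc hbe
  have hbicdb : bic d b := by
    by_contra h
    exact hB.irrefl b (hB.trans _ _ _ hbe (hspB d e b hbicde hdb h))
  exact hA.irrefl a (hA.trans _ _ _ had (hspA b d a hbicdb hab hblue))
end

section
/- Let Ĥ be a weakly balanced reflexive signed graph with a special min ordering ≤, and let Ĝ be a signed graph without purely red edges. Suppose C is a closed walk in Ĝ and f, f' are two homomorphisms of Ĝ to Ĥ such that f(v) ≤ f'(v) for all vertices v of Ĝ, every edge of f(C) is blue, and some edge of f'(C) is bicoloured. Then the sets of vertices of the closed walks f(C) and f'(C) are disjoint. -/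
variable {V VG : Type*}

/-- A min ordering of a reflexive graph: a linear (strict total) order such that if
`uv`, `u'v'` are edges with `u < u'` and `v' < v`, then `uv'` is an edge. -/
def IsMinOrderingR (E : V → V → Prop) (lt : V → V → Prop) : Prop :=
  IsStrictTotalOrder V lt ∧
    ∀ u u' v v', E u v → E u' v' → lt u u' → lt v' v → E u v'

/-- A special min ordering of a weakly balanced reflexive signed graph: a min ordering
such that at each vertex all bicoloured neighbours precede all blue neighbours. -/
def IsSpecialMinOrderingR (E bic : V → V → Prop) (lt : V → V → Prop) : Prop :=
  IsMinOrderingR E lt ∧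
    ∀ v x y, bic v x → E v y → ¬ bic v y → lt x y

/-- Key lemma: if `bb'` is a bicoloured edge, `aa'` is a blue edge with `a ≤ b`,
`a' ≤ b'`, then every vertex `x` connected to `a` by a walk of blue edges satisfies
`x < b`, `x < b'`, and `x` is adjacent to neither `b` nor `b'`. -/
lemma statement14_key (E bic : V → V → Prop)
    (hsymm : ∀ u v, E u v → E v u)
    (hbicsymm : ∀ u v, bic u v → bic v u) (hbic : ∀ u v, bic u v → E u v)
    (lt : V → V → Prop) (hspecial : IsSpecialMinOrderingR E bic lt)
    (hrefl : ∀ v, E v v)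
    {a a' b b' : V} (hbb : bic b b') (hEaa : E a a') (hnba : ¬bic a a')
    (h1 : a = b ∨ lt a b) (h2 : a' = b' ∨ lt a' b') :
    ∀ x : V, Relation.ReflTransGen (fun u v => E u v ∧ ¬bic u v) a x →
      lt x b ∧ lt x b' ∧ ¬E b x ∧ ¬E b' x := by
  obtain ⟨⟨hsto, hmin⟩, hspec⟩ := hspecial
  haveI := hsto
  have trich : ∀ x y : V, lt x y ∨ x = y ∨ lt y x := fun x y => trichotomous_of lt x y
  have asym : ∀ {x y : V}, lt x y → lt y x → False := fun hxy hyx =>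
    irrefl_of lt _ (trans_of lt hxy hyx)
  have htrans : ∀ {x y z : V}, lt x y → lt y z → lt x z := fun hxy hyz => trans_of lt hxy hyz
  -- base facts
  have hab : lt a b := by
    rcases h1 with h | h
    · exfalso
      have hb' : bic a b' := h ▸ hbb
      have h3 : lt b' a' := hspec a b' a' hb' hEaa hnba
      rcases h2 with h4 | h4
      · rw [h4] at h3; exact irrefl_of lt b' h3
      · exact asym h3 h4
    · exact h
  have ha'b' : lt a' b' := by
    rcases h2 with h | h
    · exfalso
      have hb' : bic a' b := by rw [h]; exact hbicsymm _ _ hbb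
      have h3 : lt b a := hspec a' b a hb' (hsymm _ _ hEaa) (fun hc => hnba (hbicsymm _ _ hc))
      rcases h1 with h4 | h4
      · rw [h4] at h3; exact irrefl_of lt b h3
      · exact asym h3 h4
    · exact h
  have hab' : lt a b' := by
    rcases trich a b' with h | h | h
    · exact h
    · exfalso
      have hb' : bic a b := by rw [h]; exact hbicsymm _ _ hbb
      have h3 : lt b a' := hspec a b a' hb' hEaa hnba
      exact asym (htrans h3 ha'b') (h ▸ hab)
    · exfalso
      have hE : E a b' := hmin a b a b' (hrefl a) (hbic _ _ hbb) hab h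
      by_cases hc : bic a b'
      · exact asym (hspec a b' a' hc hEaa hnba) ha'b'
      · have h3 : lt b a := hspec b' b a (hbicsymm _ _ hbb) (hsymm _ _ hE)
          (fun hd => hc (hbicsymm _ _ hd))
        exact asym h3 hab
  have ha'b : lt a' b := by
    rcases trich a' b with h | h | h
    · exact h
    · exfalso
      have hb' : bic a' b' := by rw [h]; exact hbb
      have h3 : lt b' a := hspec a' b' a hb' (hsymm _ _ hEaa) (fun hc => hnba (hbicsymm _ _ hc))
      exact asym h3 hab'
    · exfalso
      have hE : E a' b := hmin a' b' a' b (hrefl a') (hsymm _ _ (hbic _ _ hbb)) ha'b' h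
      by_cases hc : bic a' b
      · have h3 : lt b a := hspec a' b a hc (hsymm _ _ hEaa) (fun hd => hnba (hbicsymm _ _ hd))
        exact asym h3 hab
      · have h3 : lt b' a' := hspec b b' a' hbb (hsymm _ _ hE) (fun hd => hc (hbicsymm _ _ hd))
        exact asym h3 ha'b'
  have hnEba : ¬E b a := by
    intro hE
    by_cases hc : bic b a
    · have h3 : lt b a' := hspec a b a' (hbicsymm _ _ hc) hEaa hnba
      exact asym h3 ha'b
    · have h3 : lt b' a := hspec b b' a hbb hE hc
      exact asym h3 hab'
  have hnEb'a : ¬E b' a := by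
    intro hE
    by_cases hc : bic b' a
    · have h3 : lt b' a' := hspec a b' a' (hbicsymm _ _ hc) hEaa hnba
      exact asym h3 ha'b'
    · have h3 : lt b a := hspec b' b a (hbicsymm _ _ hbb) hE hc
      exact asym h3 hab
  -- induction along the blue walk
  intro x hx
  induction hx with
  | refl => exact ⟨hab, hab', hnEba, hnEb'a⟩
  | @tail p q hpath hedge ih =>
      obtain ⟨hxb, hxb', hnEbx, hnEb'x⟩ := ih
      obtain ⟨hEpq, hnbicpq⟩ := hedge
      have hqb' : lt q b' := by
        rcases trich q b' with h | h | h
        · exact h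
        · exact absurd (hsymm _ _ (h ▸ hEpq)) hnEb'x
        · exfalso
          have hE : E p b' := hmin p b q b' hEpq (hbic _ _ hbb) hxb h
          exact hnEb'x (hsymm _ _ hE)
      have hqb : lt q b := by
        rcases trich q b with h | h | h
        · exact h
        · exact absurd (hsymm _ _ (h ▸ hEpq)) hnEbx
        · exfalso
          have hE : E p b := hmin p b' q b hEpq (hsymm _ _ (hbic _ _ hbb)) hxb' h
          exact hnEbx (hsymm _ _ hE)
      have hnEbq : ¬E b q := by
        intro hE
        by_cases hc : bic b q
        · have h3 : lt b p := hspec q b p (hbicsymm _ _ hc) (hsymm _ _ hEpq)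
            (fun hd => hnbicpq (hbicsymm _ _ hd))
          exact asym h3 hxb
        · exact asym (hspec b b' q hbb hE hc) hqb'
      have hnEb'q : ¬E b' q := by
        intro hE
        by_cases hc : bic b' q
        · have h3 : lt b' p := hspec q b' p (hbicsymm _ _ hc) (hsymm _ _ hEpq)
            (fun hd => hnbicpq (hbicsymm _ _ hd))
          exact asym h3 hxb'
        · exact asym (hspec b' b q (hbicsymm _ _ hbb) hE hc) hqb
      exact ⟨hqb, hqb', hnEbq, hnEb'q⟩

/-- let `Ĥ` (edges `E`, bicoloured edges `bic`, reflexive) be a weakly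
balanced reflexive signed graph with a special min ordering, `Ĝ` (edges `EG`,
bicoloured `bicG`) a signed graph without purely red edges, `C = c_0, c_1, …, c_n = c_0`
a closed walk in `Ĝ`, and `f`, `f'` homomorphisms of `Ĝ` to `Ĥ` with `f(v) ≤ f'(v)` for
every vertex `v`, such that every edge of `f(C)` is blue and some edge of `f'(C)` is
bicoloured.  Then the vertex sets of `f(C)` and `f'(C)` are disjoint. -/
theorem statement14 [Fintype V] [Fintype VG] (E bic : V → V → Prop)
    (hrefl : ∀ v, E v v) (hsymm : ∀ u v, E u v → E v u)
    (hbicsymm : ∀ u v, bic u v → bic v u) (hbic : ∀ u v, bic u v → E u v)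
    (lt : V → V → Prop) (hspecial : IsSpecialMinOrderingR E bic lt)
    (EG bicG : VG → VG → Prop) (hbicG : ∀ x y, bicG x y → EG x y)
    (f f' : VG → V)
    (hf : ∀ x y, EG x y → E (f x) (f y)) (hfbic : ∀ x y, bicG x y → bic (f x) (f y))
    (hf' : ∀ x y, EG x y → E (f' x) (f' y)) (hf'bic : ∀ x y, bicG x y → bic (f' x) (f' y))
    (hle : ∀ v, f v = f' v ∨ lt (f v) (f' v))
    (n : ℕ) (hn : 0 < n) (c : ℕ → VG)
    (hwalk : ∀ i < n, EG (c i) (c (i + 1))) (hclosed : c n = c 0)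
    (hblue : ∀ i < n, ¬ bic (f (c i)) (f (c (i + 1))))
    (hbicol : ∃ i < n, bic (f' (c i)) (f' (c (i + 1)))) :
    ∀ i ≤ n, ∀ j ≤ n, f (c i) ≠ f' (c j) := by
  intro i hi j hj hcontra
  -- periodisation of the walk
  have hcc_succ : ∀ k : ℕ, c ((k + 1) % n) = c (k % n + 1) := by
    intro k
    have hklt : k % n < n := Nat.mod_lt _ hn
    have hgen : (k % n + 1) % n = (k + 1) % n := Nat.mod_add_mod k n 1
    rcases Nat.lt_or_ge (k % n + 1) n with h | h
    · rw [← hgen, Nat.mod_eq_of_lt h]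
    · have he : k % n + 1 = n := by omega
      rw [← hgen, he, Nat.mod_self, hclosed]
  have hAedge : ∀ k : ℕ,
      E (f (c (k % n))) (f (c ((k + 1) % n))) ∧ ¬bic (f (c (k % n))) (f (c ((k + 1) % n))) := by
    intro k
    have hklt : k % n < n := Nat.mod_lt _ hn
    rw [hcc_succ k]
    exact ⟨hf _ _ (hwalk _ hklt), hblue _ hklt⟩
  have hBedge : ∀ k : ℕ, E (f' (c (k % n))) (f' (c ((k + 1) % n))) := by
    intro k
    have hklt : k % n < n := Nat.mod_lt _ hn
    rw [hcc_succ k]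
    exact hf' _ _ (hwalk _ hklt)
  -- blue connectivity
  have hconnsymm : ∀ {u v : V}, Relation.ReflTransGen (fun u v => E u v ∧ ¬bic u v) u v →
      Relation.ReflTransGen (fun u v => E u v ∧ ¬bic u v) v u := by
    intro u v h
    induction h with
    | refl => exact .refl
    | tail hpath hedge ih =>
        exact Relation.ReflTransGen.trans
          (Relation.ReflTransGen.single
            ⟨hsymm _ _ hedge.1, fun hb => hedge.2 (hbicsymm _ _ hb)⟩) ih
  have hApath : ∀ s t : ℕ,
      Relation.ReflTransGen (fun u v => E u v ∧ ¬bic u v) (f (c (s % n))) (f (c ((s + t) % n))) := by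
    intro s t
    induction t with
    | zero => exact .refl
    | succ t ih => exact ih.tail (hAedge (s + t))
  have hAconn : ∀ k : ℕ,
      Relation.ReflTransGen (fun u v => E u v ∧ ¬bic u v) (f (c (i % n))) (f (c (k % n))) := by
    intro k
    rcases le_total i k with h | h
    · have h2 := hApath i (k - i); rwa [Nat.add_sub_cancel' h] at h2
    · have h2 := hApath k (i - k); rw [Nat.add_sub_cancel' h] at h2; exact hconnsymm h2
  -- normalising the coincidence
  have hci : f (c i) = f (c (i % n)) := by
    rcases eq_or_lt_of_le hi with h | h
    · rw [h, Nat.mod_self, hclosed]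
    · rw [Nat.mod_eq_of_lt h]
  have hcj : f' (c j) = f' (c (j % n)) := by
    rcases eq_or_lt_of_le hj with h | h
    · rw [h, Nat.mod_self, hclosed]
    · rw [Nat.mod_eq_of_lt h]
  have hq0 : f' (c (j % n)) = f (c (i % n)) := by rw [← hcj, ← hcontra, hci]
  -- main induction: the f'-walk from position j stays blue-connected to the f-walk
  have hmain : ∀ t : ℕ, Relation.ReflTransGen (fun u v => E u v ∧ ¬bic u v)
      (f (c (i % n))) (f' (c ((j + t) % n))) := by
    intro t
    induction t with
    | zero =>
        have h0 : f' (c ((j + 0) % n)) = f (c (i % n)) := by rw [Nat.add_zero]; exact hq0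
        rw [h0]
    | succ t ih =>
        by_cases hb : bic (f' (c ((j + t) % n))) (f' (c ((j + t + 1) % n)))
        · exfalso
          have hfire := statement14_key E bic hsymm hbicsymm hbic lt hspecial hrefl hb
            (hAedge (j + t)).1 (hAedge (j + t)).2 (hle _) (hle _)
            (f' (c ((j + t) % n))) ((hconnsymm (hAconn (j + t))).trans ih)
          exact hfire.2.2.1 (hrefl _)
        · exact ih.tail ⟨hBedge (j + t), hb⟩
  -- fire at the bicoloured edge of f'(C)
  obtain ⟨i₀, hi₀lt, hbic0⟩ := hbicol
  have hjlt : j % n < n := Nat.mod_lt _ hn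
  have hsum : j % n + (i₀ + (n - j % n)) = n + i₀ := by omega
  have hmod : (j + (i₀ + (n - j % n))) % n = i₀ := by
    calc (j + (i₀ + (n - j % n))) % n
        = (j % n + (i₀ + (n - j % n))) % n := (Nat.mod_add_mod j n _).symm
      _ = (n + i₀) % n := by rw [hsum]
      _ = i₀ % n := Nat.add_mod_left n i₀
      _ = i₀ := Nat.mod_eq_of_lt hi₀lt
  have hb : bic (f' (c ((j + (i₀ + (n - j % n))) % n)))
      (f' (c ((j + (i₀ + (n - j % n)) + 1) % n))) := by
    rw [hcc_succ (j + (i₀ + (n - j % n))), hmod]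
    exact hbic0
  have hfire := statement14_key E bic hsymm hbicsymm hbic lt hspecial hrefl hb
    (hAedge (j + (i₀ + (n - j % n)))).1 (hAedge (j + (i₀ + (n - j % n)))).2 (hle _) (hle _)
    (f' (c ((j + (i₀ + (n - j % n))) % n)))
    ((hconnsymm (hAconn (j + (i₀ + (n - j % n))))).trans (hmain (i₀ + (n - j % n))))
  exact hfire.2.2.1 (hrefl _)
end

section
/- Let Ĥ be a weakly balanced reflexive signed graph with a special min ordering ≤. Then there do not exist vertices a ≤ c ≤ b ≤ d and edges ab, cd of Ĥ such that ab is blue and cd is bicoloured (this holds even when some of the inequalities are equalities). -/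
variable {V : Type*}

/-- in a weakly balanced reflexive signed graph with a special min
ordering `≤` there do not exist vertices `a ≤ c ≤ b ≤ d` and edges `ab`, `cd` such that
`ab` is blue and `cd` is bicoloured (allowing equalities among the inequalities). -/
theorem statement15 [Fintype V] (E bic : V → V → Prop)
    (hrefl : ∀ v, E v v) (hsymm : ∀ u v, E u v → E v u)
    (hbicsymm : ∀ u v, bic u v → bic v u) (hbic : ∀ u v, bic u v → E u v)
    (lt : V → V → Prop) (hspecial : IsSpecialMinOrderingR E bic lt) :
    ¬ ∃ a c b d : V,
        (lt a c ∨ a = c) ∧ (lt c b ∨ c = b) ∧ (lt b d ∨ b = d) ∧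
        E a b ∧ ¬ bic a b ∧ E c d ∧ bic c d := by
  rintro ⟨a, c, b, d, hac, hcb, hbd, hab, hnab, hcd, hbcd⟩
  obtain ⟨⟨hsto, hmin⟩, hsp⟩ := hspecial
  haveI := hsto
  have key : ∀ x y : V, (lt x y ∨ x = y) → lt y x → False := by
    rintro x y (h | rfl) h'
    · exact irrefl_of lt x (trans_of lt h h')
    · exact irrefl_of lt x h'
  rcases hcb with hcb | rfl
  · rcases hbd with hbd | rfl
    · -- strict case: c < b, b < d
      have hbc : E b c := hmin b d b c (hrefl b) (hsymm c d hcd) hbd hcb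
      have hbicb : bic c b := by
        by_contra hn
        exact key b d (Or.inl hbd) (hsp c d b hbcd (hsymm b c hbc) hn)
      have hlt : lt c a := hsp b c a (hbicsymm c b hbicb) (hsymm a b hab)
        (fun h => hnab (hbicsymm b a h))
      exact key a c hac hlt
    · -- b = d : bic c b
      have hlt : lt c a := hsp b c a (hbicsymm c b hbcd) (hsymm a b hab)
        (fun h => hnab (hbicsymm b a h))
      exact key a c hac hlt
  · -- c = b
    have hlt : lt d a := hsp c d a hbcd (hsymm a c hab)
      (fun h => hnab (hbicsymm c a h))
    rcases hac with h1 | rfl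
    · rcases hbd with h2 | rfl
      · exact irrefl_of lt d (trans_of lt (trans_of lt hlt h1) h2)
      · exact irrefl_of lt c (trans_of lt hlt h1)
    · rcases hbd with h2 | rfl
      · exact irrefl_of lt d (trans_of lt hlt h2)
      · exact irrefl_of lt a hlt
end

section
/- Let Ĥ be a weakly balanced reflexive signed graph with a special min ordering ≤, let Ĝ be a signed graph without purely red edges, let C be a closed walk in Ĝ, and let f, f' be homomorphisms of Ĝ to Ĥ with f(v) ≤ f'(v) for all vertices v, such that every edge of f(C) is blue and some edge of f'(C) is bicoloured. Then there exist a blue edge ab of f(C) with a ≤ b and a bicoloured edge uv of f'(C) with u ≤ v, such that b < u. -/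
variable {V VG : Type*}

/-- with `Ĥ` reflexive with a special min ordering `≤`, `Ĝ`, the closed
walk `C = c_0, c_1, …, c_n = c_0` and homomorphisms `f ≤ f'` as in Statement 14 (every
edge of `f(C)` blue, some edge of `f'(C)` bicoloured), there exist a blue edge `ab` of
`f(C)` with `a ≤ b` and a bicoloured edge `uv` of `f'(C)` with `u ≤ v`, such that
`b < u`. -/
theorem statement16 [Fintype V] [Fintype VG] (E bic : V → V → Prop)
    (hrefl : ∀ v, E v v) (hsymm : ∀ u v, E u v → E v u)
    (hbicsymm : ∀ u v, bic u v → bic v u) (hbic : ∀ u v, bic u v → E u v)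
    (lt : V → V → Prop) (hspecial : IsSpecialMinOrderingR E bic lt)
    (EG bicG : VG → VG → Prop) (hbicG : ∀ x y, bicG x y → EG x y)
    (f f' : VG → V)
    (hf : ∀ x y, EG x y → E (f x) (f y)) (hfbic : ∀ x y, bicG x y → bic (f x) (f y))
    (hf' : ∀ x y, EG x y → E (f' x) (f' y)) (hf'bic : ∀ x y, bicG x y → bic (f' x) (f' y))
    (hle : ∀ v, f v = f' v ∨ lt (f v) (f' v))
    (n : ℕ) (hn : 0 < n) (c : ℕ → VG)
    (hwalk : ∀ i < n, EG (c i) (c (i + 1))) (hclosed : c n = c 0)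
    (hblue : ∀ i < n, ¬ bic (f (c i)) (f (c (i + 1))))
    (hbicol : ∃ i < n, bic (f' (c i)) (f' (c (i + 1)))) :
    ∃ a b u v : V,
      (∃ i < n, (a = f (c i) ∧ b = f (c (i + 1))) ∨ (a = f (c (i + 1)) ∧ b = f (c i))) ∧
      ¬ bic a b ∧ (lt a b ∨ a = b) ∧
      (∃ j < n, (u = f' (c j) ∧ v = f' (c (j + 1))) ∨ (u = f' (c (j + 1)) ∧ v = f' (c j))) ∧
      bic u v ∧ (lt u v ∨ u = v) ∧
      lt b u := by
  obtain ⟨⟨hsto, hmin⟩, hsp⟩ := hspecial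
  haveI : IsStrictTotalOrder V lt := hsto
  have htri : ∀ a b : V, lt a b ∨ a = b ∨ lt b a := fun a b => trichotomous_of lt a b
  have hirr : ∀ a : V, ¬ lt a a := fun a => irrefl_of lt a
  have htrans : ∀ a b d : V, lt a b → lt b d → lt a d := fun a b d h1 h2 => trans_of lt h1 h2
  -- Lemma A: a vertex strictly between the endpoints of a bicoloured edge is a
  -- bicoloured neighbour of the lower endpoint.
  have lemA : ∀ x y z : V, bic x z → lt x y → lt y z → bic x y := by
    intro x y z hxz hxy hyz
    have hE : E x y := hmin x y z y (hbic x z hxz) (hrefl y) hxy hyz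
    by_contra h
    exact hirr y (htrans y z y hyz (hsp x z y hxz hE h))
  obtain ⟨j, hj, hbj⟩ := hbicol
  set p := f (c j) with hp
  set q := f (c (j + 1)) with hq
  set u0 := f' (c j) with hu0
  set w0 := f' (c (j + 1)) with hw0
  have hEpq : E p q := hf _ _ (hwalk j hj)
  have hbluej : ¬ bic p q := hblue j hj
  have hbluej' : ¬ bic q p := fun h => hbluej (hbicsymm _ _ h)
  -- Step 1a : lt p u0
  have h1a : lt p u0 := by
    rcases hle (c j) with he | h
    · exfalso
      have hpe : p = u0 := he
      have h1 : E u0 q := by rw [← hpe]; exact hEpq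
      have h2 : ¬ bic u0 q := by rw [← hpe]; exact hbluej
      have hwq : lt w0 q := hsp u0 w0 q hbj h1 h2
      rcases hle (c (j + 1)) with he' | h'
      · have hqe : q = w0 := he'
        rw [hqe] at hwq; exact hirr w0 hwq
      · exact hirr w0 (htrans w0 q w0 hwq h')
    · exact h
  -- Step 1b : lt q w0
  have h1b : lt q w0 := by
    rcases hle (c (j + 1)) with he | h
    · exfalso
      have hqe : q = w0 := he
      have h1 : E w0 p := by rw [← hqe]; exact hsymm _ _ hEpq
      have h2 : ¬ bic w0 p := by rw [← hqe]; exact hbluej'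
      have hup : lt u0 p := hsp w0 u0 p (hbicsymm _ _ hbj) h1 h2
      rcases hle (c j) with he' | h'
      · have hpe : p = u0 := he'
        rw [hpe] at hup; exact hirr u0 hup
      · exact hirr u0 (htrans u0 p u0 hup h')
    · exact h
  rcases htri u0 w0 with huw | huw | huw
  · -- u0 < w0 : the smaller endpoint of the bicoloured edge is u0
    have hqu : lt q u0 := by
      rcases htri q u0 with h | h | h
      · exact h
      · exfalso
        have h1 : E u0 p := by rw [← h]; exact hsymm _ _ hEpq
        have h2 : ¬ bic u0 p := by rw [← h]; exact hbluej'
        have hwp : lt w0 p := hsp u0 w0 p hbj h1 h2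
        exact hirr p (htrans p w0 p (htrans p u0 w0 h1a huw) hwp)
      · exfalso
        have hb : bic q u0 := hbicsymm _ _ (lemA u0 q w0 hbj h h1b)
        have hup : lt u0 p := hsp q u0 p hb (hsymm _ _ hEpq) hbluej'
        exact hirr p (htrans p u0 p h1a hup)
    rcases htri p q with hpq | hpq | hpq
    · exact ⟨p, q, u0, w0, ⟨j, hj, Or.inl ⟨rfl, rfl⟩⟩, hbluej, Or.inl hpq,
        ⟨j, hj, Or.inl ⟨rfl, rfl⟩⟩, hbj, Or.inl huw, hqu⟩
    · exact ⟨p, q, u0, w0, ⟨j, hj, Or.inl ⟨rfl, rfl⟩⟩, hbluej, Or.inr hpq,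
        ⟨j, hj, Or.inl ⟨rfl, rfl⟩⟩, hbj, Or.inl huw, hqu⟩
    · exact ⟨q, p, u0, w0, ⟨j, hj, Or.inr ⟨rfl, rfl⟩⟩, hbluej', Or.inl hpq,
        ⟨j, hj, Or.inl ⟨rfl, rfl⟩⟩, hbj, Or.inl huw, h1a⟩
  · -- u0 = w0
    have hqu : lt q u0 := by rw [huw]; exact h1b
    rcases htri p q with hpq | hpq | hpq
    · exact ⟨p, q, u0, w0, ⟨j, hj, Or.inl ⟨rfl, rfl⟩⟩, hbluej, Or.inl hpq,
        ⟨j, hj, Or.inl ⟨rfl, rfl⟩⟩, hbj, Or.inr huw, hqu⟩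
    · exact ⟨p, q, u0, w0, ⟨j, hj, Or.inl ⟨rfl, rfl⟩⟩, hbluej, Or.inr hpq,
        ⟨j, hj, Or.inl ⟨rfl, rfl⟩⟩, hbj, Or.inr huw, hqu⟩
    · exact ⟨q, p, u0, w0, ⟨j, hj, Or.inr ⟨rfl, rfl⟩⟩, hbluej', Or.inl hpq,
        ⟨j, hj, Or.inl ⟨rfl, rfl⟩⟩, hbj, Or.inr huw, h1a⟩
  · -- w0 < u0 : the smaller endpoint of the bicoloured edge is w0
    have hbwu : bic w0 u0 := hbicsymm _ _ hbj
    have hpw : lt p w0 := by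
      rcases htri p w0 with h | h | h
      · exact h
      · exfalso
        have h1 : E w0 q := by rw [← h]; exact hEpq
        have h2 : ¬ bic w0 q := by rw [← h]; exact hbluej
        have huq : lt u0 q := hsp w0 u0 q hbwu h1 h2
        exact hirr q (htrans q u0 q (htrans q w0 u0 h1b huw) huq)
      · exfalso
        have hb : bic p w0 := hbicsymm _ _ (lemA w0 p u0 hbwu h h1a)
        have hwq : lt w0 q := hsp p w0 q hb hEpq hbluej
        exact hirr q (htrans q w0 q h1b hwq)
    rcases htri p q with hpq | hpq | hpq
    · exact ⟨p, q, w0, u0, ⟨j, hj, Or.inl ⟨rfl, rfl⟩⟩, hbluej, Or.inl hpq,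
        ⟨j, hj, Or.inr ⟨rfl, rfl⟩⟩, hbwu, Or.inl huw, h1b⟩
    · exact ⟨p, q, w0, u0, ⟨j, hj, Or.inl ⟨rfl, rfl⟩⟩, hbluej, Or.inr hpq,
        ⟨j, hj, Or.inr ⟨rfl, rfl⟩⟩, hbwu, Or.inl huw, h1b⟩
    · exact ⟨q, p, w0, u0, ⟨j, hj, Or.inr ⟨rfl, rfl⟩⟩, hbluej', Or.inl hpq,
        ⟨j, hj, Or.inr ⟨rfl, rfl⟩⟩, hbwu, Or.inl huw, hpw⟩
end

section
/- Let Ĥ be a weakly balanced reflexive signed graph with a special min ordering ≤. If there is a blue edge ab and a bicoloured edge cd such that a < c ≤ d < b, then there is no blue edge ae with a < e and e < c. -/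
variable {V : Type*}

/-- in a weakly balanced reflexive signed graph with a special min
ordering `≤`, if there is a blue edge `ab` and a bicoloured edge `cd` such that
`a < c ≤ d < b`, then there is no blue edge `ae` with `a < e` and `e < c`. -/
theorem statement17 [Fintype V] (E bic : V → V → Prop)
    (hrefl : ∀ v, E v v) (hsymm : ∀ u v, E u v → E v u)
    (hbicsymm : ∀ u v, bic u v → bic v u) (hbic : ∀ u v, bic u v → E u v)
    (lt : V → V → Prop) (hspecial : IsSpecialMinOrderingR E bic lt)
    (a b c d : V) (hab : E a b) (habblue : ¬ bic a b)
    (hcd : E c d) (hcdbic : bic c d)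
    (hac : lt a c) (hcd' : lt c d ∨ c = d) (hdb : lt d b) :
    ¬ ∃ e : V, E a e ∧ ¬ bic a e ∧ lt a e ∧ lt e c := by
  rintro ⟨e, hae, haeblue, hae', hec⟩
  obtain ⟨⟨hsto, hmin⟩, hsp⟩ := hspecial
  have htrans : ∀ {x y z}, lt x y → lt y z → lt x z := fun h1 h2 => hsto.trans _ _ _ h1 h2
  have hirr : ∀ x, ¬ lt x x := hsto.irrefl
  -- edge a d from min ordering
  have had : E a d := hmin a c b d hab hcd hac hdb
  have hed : lt e d := by
    rcases hcd' with h | h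
    · exact htrans hec h
    · exact h ▸ hec
  by_cases hbad : bic a d
  · -- special at a: d < e, contradiction with e < d
    have := hsp a d e hbad hae haeblue
    exact hirr e (htrans hed this)
  · -- special at d: c < a, contradiction with a < c
    have hda : ¬ bic d a := fun h => hbad (hbicsymm _ _ h)
    have := hsp d c a (hbicsymm _ _ hcdbic) (hsymm _ _ had) hda
    exact hirr a (htrans hac this)
end

section
/- Let Ĥ be a weakly balanced reflexive signed graph with a special min ordering ≤. Suppose ab is a blue edge and de is a bicoloured edge with a ≤ b < d ≤ e. Then there is no walk from b to a vertex c with d ≤ c all of whose edges are blue. -/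
variable {V : Type*}

/-- in a weakly balanced reflexive signed graph with a special min
ordering `≤`, if `ab` is a blue edge and `de` a bicoloured edge with `a ≤ b < d ≤ e`,
then there is no walk from `b` to a vertex `c` with `d ≤ c` all of whose edges are
blue. -/
theorem statement18 [Fintype V] (E bic : V → V → Prop)
    (hrefl : ∀ v, E v v) (hsymm : ∀ u v, E u v → E v u)
    (hbicsymm : ∀ u v, bic u v → bic v u) (hbic : ∀ u v, bic u v → E u v)
    (lt : V → V → Prop) (hspecial : IsSpecialMinOrderingR E bic lt)
    (a b d e : V) (hab : E a b) (habblue : ¬ bic a b)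
    (hde : E d e) (hdebic : bic d e)
    (hab' : lt a b ∨ a = b) (hbd : lt b d) (hde' : lt d e ∨ d = e) :
    ¬ ∃ (m : ℕ) (w : ℕ → V),
        w 0 = b ∧
        (∀ i < m, E (w i) (w (i + 1)) ∧ ¬ bic (w i) (w (i + 1))) ∧
        (lt d (w m) ∨ d = w m) := by
  obtain ⟨⟨hSTO, hmin⟩, hspec⟩ := hspecial
  haveI := hSTO
  have htri : ∀ x y : V, lt x y ∨ x = y ∨ lt y x := fun x y => trichotomous x y
  have htrans : ∀ x y z : V, lt x y → lt y z → lt x z := fun x y z h1 h2 =>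
    _root_.trans h1 h2
  have hirr : ∀ x : V, ¬ lt x x := fun x => irrefl x
  have hasym : ∀ x y : V, lt x y → lt y x → False := fun x y h1 h2 =>
    hirr x (htrans x y x h1 h2)
  rintro ⟨m, w, hw0, hblue, hend⟩
  classical
  have hPm : ¬ lt (w m) d := by
    rcases hend with h | h
    · exact fun h' => hasym _ _ h h'
    · exact fun h' => hirr d (h ▸ h')
  have hex : ∃ i, ¬ lt (w i) d := ⟨m, hPm⟩
  set i := Nat.find hex with hi
  have hPi : ¬ lt (w i) d := Nat.find_spec hex
  have hlow : ∀ j < i, lt (w j) d := fun j hj => not_not.mp (Nat.find_min hex hj)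
  have hipos : 0 < i := by
    rcases Nat.eq_zero_or_pos i with h | h
    · exact absurd (by rw [h, hw0]; exact hbd) hPi
    · exact h
  have him : i ≤ m := by
    by_contra h
    exact hPm (hlow m (by omega))
  have hi1 : i - 1 + 1 = i := Nat.succ_pred_eq_of_pos hipos
  have hedge := hblue (i - 1) (by omega)
  rw [hi1] at hedge
  obtain ⟨hEpq, hpqblue⟩ := hedge
  have hpd : lt (w (i - 1)) d := hlow (i - 1) (by omega)
  have hpe : lt (w (i - 1)) e := by
    rcases hde' with h | h
    · exact htrans _ _ _ hpd h
    · exact h ▸ hpd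
  rcases htri d (w i) with hdq | hdq | hdq
  · -- d < w i : get E d (w (i-1))
    have hEdp : E d (w (i - 1)) :=
      hmin d (w i) e (w (i - 1)) hde (hsymm _ _ hEpq) hdq hpe
    by_cases hb : bic d (w (i - 1))
    · -- bicoloured: look at the predecessor of w (i-1)
      have hbpd : bic (w (i - 1)) d := hbicsymm _ _ hb
      rcases Nat.eq_or_lt_of_le hipos with h1 | h1
    -- i = 1 : w (i-1) = b
      · have hpb : w (i - 1) = b := by rw [← h1]; simpa using hw0
        have : lt d a := hspec (w (i - 1)) d a hbpd
          (by rw [hpb]; exact hsymm _ _ hab)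
          (by rw [hpb]; exact fun hc => habblue (hbicsymm _ _ hc))
        have had : lt a d := by
          rcases hab' with h | h
          · exact htrans _ _ _ h hbd
          · exact h ▸ hbd
        exact hasym _ _ this had
      -- i ≥ 2 : predecessor w (i-2)
      · have h2 : 2 ≤ i := h1
        have hi2 : i - 2 + 1 = i - 1 := by omega
        have hedge2 := hblue (i - 2) (by omega)
        rw [hi2] at hedge2
        obtain ⟨hErp, hrpblue⟩ := hedge2
        have hrd : lt (w (i - 2)) d := hlow (i - 2) (by omega)
        have : lt d (w (i - 2)) := hspec (w (i - 1)) d (w (i - 2)) hbpd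
          (hsymm _ _ hErp) (fun hc => hrpblue (hbicsymm _ _ hc))
        exact hasym _ _ this hrd
    · have : lt e (w (i - 1)) := hspec d e (w (i - 1)) hdebic hEdp hb
      exact hasym _ _ this hpe
  · -- d = w i : blue edge (w (i-1)) d
    have hEdp : E d (w (i - 1)) := hdq ▸ hsymm _ _ hEpq
    have hb : ¬ bic d (w (i - 1)) := fun hc =>
      hpqblue (hbicsymm _ _ (hdq ▸ hc))
    have : lt e (w (i - 1)) := hspec d e (w (i - 1)) hdebic hEdp hb
    exact hasym _ _ this hpe
  · exact hPi hdq
end
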